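/- arXiv:1801.05565 — 4 statements merged into one kernel-verified Lean document; each statement's English description precedes it below -/
import Mathlib

section
/- Define ψ : ℝ → ℝ by ψ(x) = 1/2 for x > 1, ψ(x) = x - sign(x)·x²/2 for |x| ≤ 1, and ψ(x) = -1/2 for x < -1. Then for all real x, -log(1 - x + x²) ≤ ψ(x) ≤ log(1 + x + x²). -/
noncomputable def psi (x : ℝ) : ℝ :=
  if x > 1 then 1 / 2
  else if x < -1 then -1 / 2
  else x - Real.sign x * x ^ 2 / 2

lemma cubic_le_exp {v : ℝ} (hv : 0 ≤ v) :
    1 + v + v ^ 2 / 2 + v ^ 3 / 6 ≤ Real.exp v := by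
  calc 1 + v + v ^ 2 / 2 + v ^ 3 / 6
      = ∑ i ∈ Finset.range 4, v ^ i / (Nat.factorial i : ℝ) := by
        norm_num [Finset.sum_range_succ, Nat.factorial]
    _ ≤ Real.exp v := Real.sum_le_exp_of_nonneg hv 4

lemma psi_neg (x : ℝ) : psi (-x) = -psi x := by
  unfold psi
  split_ifs <;>
    first
      | (rw [Real.sign_neg]; ring1)
      | linarith
      | (exfalso; linarith)
      | norm_num

lemma psi_le_log (x : ℝ) : psi x ≤ Real.log (1 + x + x ^ 2) := by
  have hpos : (0:ℝ) < 1 + x + x ^ 2 := by nlinarith [sq_nonneg (x + 1), sq_nonneg x]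
  unfold psi
  split_ifs with h1 h2
  · rw [Real.le_log_iff_exp_le hpos]
    have he : Real.exp ((1:ℝ)/2) ≤ 2 := by
      have h2 : Real.exp ((1:ℝ)/2) * Real.exp ((1:ℝ)/2) = Real.exp 1 := by
        rw [← Real.exp_add]; norm_num
      have h3 : Real.exp 1 < 2.7182818286 := Real.exp_one_lt_d9
      nlinarith [Real.exp_pos ((1:ℝ)/2)]
    nlinarith
  · rw [Real.le_log_iff_exp_le hpos]
    have he : Real.exp (-(1/2) : ℝ) ≤ 3/4 := by
      have h2 : Real.exp (-(1/2):ℝ) * Real.exp ((1:ℝ)/2) = 1 := by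
        rw [← Real.exp_add]; norm_num
      have h3 : (3:ℝ)/2 ≤ Real.exp ((1:ℝ)/2) := by
        have := Real.add_one_le_exp ((1:ℝ)/2); linarith
      nlinarith [Real.exp_pos (-(1/2):ℝ)]
    nlinarith
  · push_neg at h1 h2
    rw [Real.le_log_iff_exp_le hpos]
    rcases lt_trichotomy x 0 with hx | hx | hx
    · rw [Real.sign_of_neg hx]
      set u : ℝ := x - (-1) * x ^ 2 / 2 with hu
      have huv : u = x + x ^ 2 / 2 := by rw [hu]; ring
      have hv : 0 ≤ -u := by rw [huv]; nlinarith
      have hc := cubic_le_exp hv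
      have hmul : Real.exp u * Real.exp (-u) = 1 := by
        rw [← Real.exp_add]; simp
      have hx3 : 0 ≤ -x ^ 3 := by nlinarith
      have hg : (0:ℝ) ≤ 32 - 10*x - 4*x^2 + 13*x^3 + 7*x^4 + x^5 := by
        nlinarith [mul_nonneg (by linarith : (0:ℝ) ≤ x + 1) (by nlinarith [sq_nonneg (x-1)] : (0:ℝ) ≤ x^2 - x + 1),
          mul_nonneg (by linarith : (0:ℝ) ≤ x + 1) (by linarith : (0:ℝ) ≤ 1 - x),
          sq_nonneg x, sq_nonneg (x+1)]
      have hfac : (1:ℝ) ≤ (1 + (-u) + (-u) ^ 2 / 2 + (-u) ^ 3 / 6) * (1 + x + x ^ 2) := by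
        rw [huv]; nlinarith [mul_nonneg hx3 hg]
      have hep := Real.exp_pos u
      nlinarith [Real.exp_pos (-u)]
    · subst hx; simp
    · rw [Real.sign_of_pos hx]
      set u : ℝ := x - 1 * x ^ 2 / 2 with hu
      have huv : u = x - x ^ 2 / 2 := by rw [hu]; ring
      have h1u : 0 < 1 - u := by rw [huv]; nlinarith
      have hc : 1 - u ≤ Real.exp (-u) := by
        have := Real.add_one_le_exp (-u); linarith
      have hmul : Real.exp u * Real.exp (-u) = 1 := by
        rw [← Real.exp_add]; simp
      have hfac : (1:ℝ) ≤ (1 - u) * (1 + x + x ^ 2) := by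
        rw [huv]; nlinarith [sq_nonneg x, sq_nonneg (x - 1)]
      have hep := Real.exp_pos u
      nlinarith [Real.exp_pos (-u)]

theorem psi_log_bounds (x : ℝ) :
    -Real.log (1 - x + x ^ 2) ≤ psi x ∧ psi x ≤ Real.log (1 + x + x ^ 2) := by
  constructor
  · have h := psi_le_log (-x)
    rw [psi_neg] at h
    have : 1 + -x + (-x) ^ 2 = 1 - x + x ^ 2 := by ring
    rw [this] at h
    linarith
  · exact psi_le_log x
end

section
/- Let f : ℝ → ℝ be convex. Then the map A ↦ tr f(A) on d × d self-adjoint matrices is convex; in particular, for any self-adjoint A, B: tr f((A+B)/2) ≤ (tr f(A) + tr f(B))/2. -/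
open Matrix

/-- The trace of `f(A)` for a Hermitian matrix `A`, defined spectrally as the
sum of `f` over the eigenvalues of `A`. -/
noncomputable def trFun {d : ℕ} (f : ℝ → ℝ) {A : Matrix (Fin d) (Fin d) ℂ}
    (hA : A.IsHermitian) : ℝ :=
  ∑ i, f (hA.eigenvalues i)

/-! Diagonalize `C = t • A + (1 - t) • B` by a unitary `V`. The eigenvalues of `C` are the
diagonal entries of `V⋆ C V`, which depend affinely on `A` and `B`, so convexity of `f` gives
`tr f(C) ≤ t ∑ᵢ f((V⋆ A V)ᵢᵢ) + (1 - t) ∑ᵢ f((V⋆ B V)ᵢᵢ)`. Peierls' inequality finishes: if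
`A = U D U⋆`, the diagonal of `V⋆ A V` is the image of the spectrum of `A` under the doubly
stochastic matrix `(|Wₖᵢ|²)` with `W = U⋆ V`, so Jensen's inequality gives
`∑ᵢ f((V⋆ A V)ᵢᵢ) ≤ tr f(A)`. -/

section

variable {𝕜 n : Type*} [RCLike 𝕜] [Fintype n] [DecidableEq n]

lemma unitaryGroup.norm_sq_entries_mem_doublyStochastic (U : unitaryGroup n 𝕜) :
    of (fun i j => ‖(U : Matrix n n 𝕜) i j‖ ^ 2) ∈ doublyStochastic ℝ n := by
  have hrow (i : n) : ∑ j, ‖(U : Matrix n n 𝕜) i j‖ ^ 2 = 1 := by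
    have h := congr_fun₂ (mem_unitaryGroup_iff.mp U.2) i i
    simp only [mul_apply, star_apply, RCLike.star_def, RCLike.mul_conj, one_apply_eq] at h
    exact_mod_cast h
  have hcol (j : n) : ∑ i, ‖(U : Matrix n n 𝕜) i j‖ ^ 2 = 1 := by
    have h := congr_fun₂ (mem_unitaryGroup_iff'.mp U.2) j j
    simp only [mul_apply, star_apply, RCLike.star_def, RCLike.conj_mul, one_apply_eq] at h
    exact_mod_cast h
  exact mem_doublyStochastic_iff_sum.mpr ⟨fun _ _ => sq_nonneg _, hrow, hcol⟩

lemma re_star_mul_diagonal_mul_apply_self (W : Matrix n n 𝕜) (g : n → ℝ) (i : n) :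
    RCLike.re ((star W * (diagonal (RCLike.ofReal ∘ g) : Matrix n n 𝕜) * W) i i)
      = ∑ k, ‖W k i‖ ^ 2 * g k := by
  simp only [mul_apply, diagonal_apply, star_apply, mul_ite, mul_zero, Finset.sum_ite_eq',
    Finset.mem_univ, if_true, Function.comp_apply, RCLike.star_def, map_sum]
  congr 1 with k
  rw [mul_right_comm, RCLike.conj_mul, ← RCLike.ofReal_pow, ← RCLike.ofReal_mul,
    RCLike.ofReal_re]

lemma Matrix.IsHermitian.re_star_eigenvectorUnitary_mul_mul_apply_self {A : Matrix n n 𝕜}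
    (hA : A.IsHermitian) (i : n) :
    RCLike.re ((star (hA.eigenvectorUnitary : Matrix n n 𝕜) * A * hA.eigenvectorUnitary) i i)
      = hA.eigenvalues i := by
  rw [← Unitary.conjStarAlgAut_star_apply (S := 𝕜), hA.conjStarAlgAut_star_eigenvectorUnitary]
  simp

theorem ConvexOn.sum_map_sum_mul_le_of_mem_doublyStochastic {s : Set ℝ} {f : ℝ → ℝ}
    (hf : ConvexOn ℝ s f) {M : Matrix n n ℝ} (hM : M ∈ doublyStochastic ℝ n) {x : n → ℝ}
    (hx : ∀ i, x i ∈ s) :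
    ∑ j, f (∑ i, M i j * x i) ≤ ∑ i, f (x i) :=
  calc ∑ j, f (∑ i, M i j * x i)
      ≤ ∑ j, ∑ i, M i j * f (x i) := Finset.sum_le_sum fun j _ =>
        hf.map_sum_le (fun i _ => nonneg_of_mem_doublyStochastic hM)
          (sum_col_of_mem_doublyStochastic hM j) (fun i _ => hx i)
    _ = ∑ i, f (x i) := by
        rw [Finset.sum_comm]
        simp only [← Finset.sum_mul, sum_row_of_mem_doublyStochastic hM, one_mul]

theorem ConvexOn.sum_re_star_mul_mul_apply_self_le {f : ℝ → ℝ} (hf : ConvexOn ℝ Set.univ f)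
    {A : Matrix n n 𝕜} (hA : A.IsHermitian) (V : unitaryGroup n 𝕜) :
    ∑ i, f (RCLike.re ((star (V : Matrix n n 𝕜) * A * V) i i)) ≤ ∑ i, f (hA.eigenvalues i) := by
  set W := star hA.eigenvectorUnitary * V
  have hconj : star (V : Matrix n n 𝕜) * A * (V : Matrix n n 𝕜)
      = star (W : Matrix n n 𝕜) * diagonal (RCLike.ofReal ∘ hA.eigenvalues)
        * (W : Matrix n n 𝕜) := by
    conv_lhs => rw [hA.spectral_theorem, Unitary.conjStarAlgAut_apply]
    simp only [W, Submonoid.coe_mul, Unitary.coe_star, star_mul, star_star, Matrix.mul_assoc]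
  simp only [hconj, re_star_mul_diagonal_mul_apply_self]
  exact hf.sum_map_sum_mul_le_of_mem_doublyStochastic
    (unitaryGroup.norm_sq_entries_mem_doublyStochastic W) fun _ => Set.mem_univ _

end

lemma re_star_mul_smul_add_smul_mul_apply_self {𝕜 n : Type*} [RCLike 𝕜] [Fintype n]
    (V A B : Matrix n n 𝕜) (a b : ℝ) (i : n) :
    RCLike.re ((star V * (a • A + b • B) * V) i i)
      = a * RCLike.re ((star V * A * V) i i) + b * RCLike.re ((star V * B * V) i i) := by
  simp [Matrix.mul_add, Matrix.add_mul, RCLike.smul_re]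

lemma trFun_congr {d : ℕ} (f : ℝ → ℝ) {A B : Matrix (Fin d) (Fin d) ℂ}
    (hA : A.IsHermitian) (hB : B.IsHermitian) (h : A = B) :
    trFun f hA = trFun f hB := by
  subst h; rfl

theorem trFun_smul_add_one_sub_smul_le {d : ℕ} {f : ℝ → ℝ} (hf : ConvexOn ℝ Set.univ f)
    {A B : Matrix (Fin d) (Fin d) ℂ} (hA : A.IsHermitian) (hB : B.IsHermitian) {t : ℝ}
    (ht0 : 0 ≤ t) (ht1 : t ≤ 1) (hC : (t • A + (1 - t) • B).IsHermitian) :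
    trFun f hC ≤ t * trFun f hA + (1 - t) * trFun f hB := by
  set V := hC.eigenvectorUnitary
  set a := fun i => RCLike.re ((star (V : Matrix (Fin d) (Fin d) ℂ) * A * V) i i)
  set b := fun i => RCLike.re ((star (V : Matrix (Fin d) (Fin d) ℂ) * B * V) i i)
  have heig (i : Fin d) : hC.eigenvalues i = t * a i + (1 - t) * b i := by
    rw [← hC.re_star_eigenvectorUnitary_mul_mul_apply_self,
      re_star_mul_smul_add_smul_mul_apply_self]
  calc trFun f hC = ∑ i, f (t * a i + (1 - t) * b i) := by simp only [trFun, heig]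
    _ ≤ ∑ i, (t * f (a i) + (1 - t) * f (b i)) := Finset.sum_le_sum fun i _ =>
        hf.2 (Set.mem_univ _) (Set.mem_univ _) ht0 (sub_nonneg.mpr ht1) (by ring)
    _ = t * ∑ i, f (a i) + (1 - t) * ∑ i, f (b i) := by
        rw [Finset.sum_add_distrib, Finset.mul_sum, Finset.mul_sum]
    _ ≤ t * trFun f hA + (1 - t) * trFun f hB := by
        have hA' : ∑ i, f (a i) ≤ trFun f hA := hf.sum_re_star_mul_mul_apply_self_le hA V
        have hB' : ∑ i, f (b i) ≤ trFun f hB := hf.sum_re_star_mul_mul_apply_self_le hB V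
        gcongr

theorem trace_convexity {d : ℕ} (f : ℝ → ℝ) (hf : ConvexOn ℝ Set.univ f) :
    (∀ (A B : Matrix (Fin d) (Fin d) ℂ) (hA : A.IsHermitian) (hB : B.IsHermitian)
      (t : ℝ) (ht0 : 0 ≤ t) (ht1 : t ≤ 1)
      (hC : (t • A + (1 - t) • B).IsHermitian),
        trFun f hC ≤ t * trFun f hA + (1 - t) * trFun f hB) ∧
    (∀ (A B : Matrix (Fin d) (Fin d) ℂ) (hA : A.IsHermitian) (hB : B.IsHermitian)
      (hM : ((1 / 2 : ℝ) • (A + B)).IsHermitian),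
        trFun f hM ≤ (trFun f hA + trFun f hB) / 2) := by
  refine ⟨fun A B hA hB t ht0 ht1 hC => trFun_smul_add_one_sub_smul_le hf hA hB ht0 ht1 hC,
    fun A B hA hB hM => ?_⟩
  have hmid : (1 / 2 : ℝ) • (A + B) = (1 / 2 : ℝ) • A + (1 - 1 / 2 : ℝ) • B := by
    rw [smul_add]; norm_num
  have hC : ((1 / 2 : ℝ) • A + (1 - 1 / 2 : ℝ) • B).IsHermitian := hmid ▸ hM
  rw [trFun_congr f hM hC hmid]
  linarith [trFun_smul_add_one_sub_smul_le hf hA hB (by norm_num) (by norm_num) hC]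
end

section
/- Let Y₁ and Y₂ be i.i.d. random vectors in ℝ^d with mean μ, covariance Σ = E[(Y-μ)(Y-μ)ᵀ], and E‖Y - μ‖₂⁴ < ∞. Set H = (Y₁ - Y₂)(Y₁ - Y₂)ᵀ/2, so E[H] = Σ. Then E[(H - Σ)²] = (1/2)( E[((Y-μ)(Y-μ)ᵀ)²] + tr(Σ)·Σ ), where Y is distributed as Y₁. -/
/-!
Write `Y₁ - Y₂ = X - Z` with `X = Y₁ - m`, `Z = Y₂ - m` independent centred copies. Since
`E H = Σ`, `E[(H - Σ)²] = E[H²] - Σ²`, and `(H²)_ij = ¼ ∑_k D_i D_k D_k D_j` with `D = X - Z`, so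
everything reduces to fourth moments of `D`. Expanding `∏ (X_i - Z_i)` over subsets and factoring
each term by independence, every term containing a lone centred factor vanishes, which leaves
`E[D_a D_b D_c D_e] = 2 E[X_a X_b X_c X_e] + 2 (Σ_ab Σ_ce + Σ_ac Σ_be + Σ_ae Σ_bc)`.
-/

open Matrix MeasureTheory ProbabilityTheory Finset
open scoped ENNReal

section Integrability

variable {Ω ι κ : Type*} [MeasurableSpace Ω] {μ : Measure Ω}

lemma integrable_finset_prod_of_memLp {𝕜 : Type*} [NormedCommRing 𝕜] [IsFiniteMeasure μ]
    {s : Finset κ} {f : κ → Ω → 𝕜} {n : ℕ} (hs : #s ≤ n) (hf : ∀ i ∈ s, MemLp (f i) n μ) :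
    Integrable (fun ω => ∏ i ∈ s, f i ω) μ := by
  refine (MemLp.prod' hf).integrable ?_
  rw [ENNReal.one_le_inv, sum_const, nsmul_eq_mul]
  rcases Nat.eq_zero_or_pos n with rfl | hn
  · simp [card_eq_zero.mp (Nat.le_zero.mp hs)]
  · calc (#s : ℝ≥0∞) * (n : ℝ≥0∞)⁻¹ ≤ n * (n : ℝ≥0∞)⁻¹ := by gcongr
      _ = 1 := ENNReal.mul_inv_cancel (by exact_mod_cast hn.ne') (ENNReal.natCast_ne_top n)

lemma integrable_mul_mul_mul_of_memLp_four [IsFiniteMeasure μ] {f g h k : Ω → ℝ}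
    (hf : MemLp f 4 μ) (hg : MemLp g 4 μ) (hh : MemLp h 4 μ) (hk : MemLp k 4 μ) :
    Integrable (fun ω => f ω * g ω * h ω * k ω) μ := by
  have h := integrable_finset_prod_of_memLp (μ := μ) (s := univ) (f := ![f, g, h, k]) (n := 4)
    (by simp) fun i _ => by fin_cases i <;> assumption
  simpa [Fin.prod_univ_four] using h

lemma ProbabilityTheory.IdentDistrib.memLp_apply_sub {X Z : Ω → ι → ℝ}
    (hid : IdentDistrib X Z μ μ) {p : ℝ≥0∞} (hX : ∀ a, MemLp (fun ω => X ω a) p μ) (a : ι) :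
    MemLp (fun ω => X ω a - Z ω a) p μ :=
  (hX a).sub ((hid.comp (measurable_pi_apply a)).memLp_snd (hX a))

end Integrability

section IndependentCopies

variable {Ω E κ : Type*} [MeasurableSpace Ω] [MeasurableSpace E] {μ : Measure Ω} {X Z : Ω → E}

lemma ProbabilityTheory.IndepFun.integral_comp_mul_comp_of_identDistrib (hXZ : IndepFun X Z μ)
    (hid : IdentDistrib X Z μ μ) {F G : E → ℝ} (hF : Measurable F) (hG : Measurable G) :
    ∫ ω, F (X ω) * G (Z ω) ∂μ = (∫ ω, F (X ω) ∂μ) * ∫ ω, G (X ω) ∂μ := by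
  rw [hXZ.integral_fun_comp_mul_comp hid.aemeasurable_fst hid.aemeasurable_snd
    hF.aestronglyMeasurable hG.aestronglyMeasurable]
  exact congrArg _ (hid.comp hG).integral_eq.symm

lemma ProbabilityTheory.IndepFun.integral_prod_sub_of_identDistrib [DecidableEq κ]
    (hXZ : IndepFun X Z μ) (hid : IdentDistrib X Z μ μ) (s : Finset κ) {f : κ → E → ℝ}
    (hf : ∀ i, Measurable (f i)) (hint : ∀ t ⊆ s, Integrable (fun ω => ∏ i ∈ t, f i (X ω)) μ) :
    ∫ ω, ∏ i ∈ s, (f i (X ω) - f i (Z ω)) ∂μ =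
      ∑ t ∈ s.powerset, (-1) ^ #(s \ t) *
        (∫ ω, ∏ i ∈ t, f i (X ω) ∂μ) * ∫ ω, ∏ i ∈ s \ t, f i (X ω) ∂μ := by
  have hprod (t : Finset κ) : Measurable fun x => ∏ i ∈ t, f i x :=
    Finset.measurable_prod t fun i _ => hf i
  have hexpand (ω : Ω) : ∏ i ∈ s, (f i (X ω) - f i (Z ω)) = ∑ t ∈ s.powerset,
      (-1) ^ #(s \ t) * ((∏ i ∈ t, f i (X ω)) * ∏ i ∈ s \ t, f i (Z ω)) := by
    simp_rw [sub_eq_add_neg, prod_add, prod_neg]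
    exact sum_congr rfl fun t _ => by ring
  simp_rw [hexpand]
  rw [integral_finsetSum _ fun t ht => ?_]
  · refine sum_congr rfl fun t _ => ?_
    rw [integral_const_mul, hXZ.integral_comp_mul_comp_of_identDistrib hid (hprod t) (hprod _),
      mul_assoc]
  · refine Integrable.const_mul ?_ _
    exact (hXZ.comp (hprod t) (hprod (s \ t))).integrable_mul (hint t (mem_powerset.mp ht))
      ((hid.comp (hprod (s \ t))).integrable_snd (hint _ sdiff_subset))

end IndependentCopies

lemma sum_powerset_univ_fin_two (m : Finset (Fin 2) → ℝ) (h0 : m ∅ = 1) (h1 : ∀ i, m {i} = 0) :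
    ∑ t ∈ (univ : Finset (Fin 2)).powerset, (-1) ^ #(univ \ t) * m t * m (univ \ t) =
      2 * m univ := by
  rw [show (univ : Finset (Fin 2)) = insert 0 (insert 1 ∅) by rfl]
  simp (disch := decide) only [sum_powerset_insert, powerset_empty, sum_singleton,
    sdiff_eq_filter, filter_insert, filter_empty]
  simp +decide only [reduceIte, mem_singleton, insert_empty_eq, card_insert_of_notMem,
    card_singleton, card_empty, h0, h1]
  ring

lemma sum_powerset_univ_fin_four (m : Finset (Fin 4) → ℝ) (h0 : m ∅ = 1) (h1 : ∀ i, m {i} = 0) :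
    ∑ t ∈ (univ : Finset (Fin 4)).powerset, (-1) ^ #(univ \ t) * m t * m (univ \ t) =
      2 * m univ + 2 * (m {0, 1} * m {2, 3} + m {0, 2} * m {1, 3} + m {0, 3} * m {1, 2}) := by
  rw [show (univ : Finset (Fin 4)) = insert 0 (insert 1 (insert 2 (insert 3 ∅))) by rfl]
  simp (disch := decide) only [sum_powerset_insert, powerset_empty, sum_singleton,
    sdiff_eq_filter, filter_insert, filter_empty]
  simp +decide only [reduceIte, mem_insert, mem_singleton, insert_empty_eq,
    card_insert_of_notMem, card_singleton, card_empty, h0, h1]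
  ring

section CenteredCopies

variable {Ω ι : Type*} [MeasurableSpace Ω] {μ : Measure Ω} {X Z : Ω → ι → ℝ}
  (hXZ : IndepFun X Z μ) (hid : IdentDistrib X Z μ μ)
include hXZ hid

lemma integral_prod_apply_sub_apply_eq_sum_powerset [IsFiniteMeasure μ] {n : ℕ} (c : Fin n → ι)
    (hX : ∀ a, MemLp (fun ω => X ω a) n μ) :
    ∫ ω, ∏ i, (X ω (c i) - Z ω (c i)) ∂μ =
      ∑ t ∈ (univ : Finset (Fin n)).powerset, (-1) ^ #(univ \ t) *
        (∫ ω, ∏ i ∈ t, X ω (c i) ∂μ) * ∫ ω, ∏ i ∈ univ \ t, X ω (c i) ∂μ :=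
  hXZ.integral_prod_sub_of_identDistrib hid univ (fun i => measurable_pi_apply (c i))
    fun t _ => integrable_finset_prod_of_memLp ((card_le_univ t).trans_eq (Fintype.card_fin n))
      fun i _ => hX (c i)

variable [IsProbabilityMeasure μ] (hcent : ∀ a, ∫ ω, X ω a ∂μ = 0)
include hcent

lemma integral_sub_mul_sub_of_identDistrib (hX : ∀ a, MemLp (fun ω => X ω a) 2 μ) (a b : ι) :
    ∫ ω, (X ω a - Z ω a) * (X ω b - Z ω b) ∂μ = 2 * ∫ ω, X ω a * X ω b ∂μ := by
  have h := integral_prod_apply_sub_apply_eq_sum_powerset hXZ hid ![a, b] hX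
  rw [sum_powerset_univ_fin_two _ (by simp) fun i => by fin_cases i <;> simp [hcent]] at h
  simpa [Fin.prod_univ_two] using h

lemma integral_sub_mul_sub_mul_sub_mul_sub_of_identDistrib
    (hX : ∀ a, MemLp (fun ω => X ω a) 4 μ) (a b c e : ι) :
    ∫ ω, (X ω a - Z ω a) * (X ω b - Z ω b) * (X ω c - Z ω c) * (X ω e - Z ω e) ∂μ =
      2 * ∫ ω, X ω a * X ω b * X ω c * X ω e ∂μ +
        2 * ((∫ ω, X ω a * X ω b ∂μ) * (∫ ω, X ω c * X ω e ∂μ) +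
          (∫ ω, X ω a * X ω c ∂μ) * (∫ ω, X ω b * X ω e ∂μ) +
          (∫ ω, X ω a * X ω e ∂μ) * (∫ ω, X ω b * X ω c ∂μ)) := by
  have h := integral_prod_apply_sub_apply_eq_sum_powerset hXZ hid ![a, b, c, e] hX
  rw [sum_powerset_univ_fin_four _ (by simp) fun i => by fin_cases i <;> simp [hcent]] at h
  simpa [Fin.prod_univ_four] using h

end CenteredCopies

section MatrixMoments

variable {Ω ι : Type*} [MeasurableSpace Ω] {μ : Measure Ω} [Fintype ι]

lemma integral_sub_mul_sub_apply [IsProbabilityMeasure μ] {H : Ω → Matrix ι ι ℝ}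
    {S : Matrix ι ι ℝ} (hH : ∀ a b, Integrable (fun ω => H ω a b) μ)
    (hHH : ∀ a b c, Integrable (fun ω => H ω a b * H ω b c) μ)
    (hmean : ∀ a b, ∫ ω, H ω a b ∂μ = S a b) (i j : ι) :
    ∫ ω, ((H ω - S) * (H ω - S)) i j ∂μ = ∫ ω, (H ω * H ω) i j ∂μ - (S * S) i j := by
  have hexpand (k : ι) (ω : Ω) : (H ω i k - S i k) * (H ω k j - S k j) =
      H ω i k * H ω k j - S k j * H ω i k - S i k * H ω k j + S i k * S k j := by ring
  have hint (k : ι) : Integrable (fun ω => H ω i k * H ω k j - S k j * H ω i k -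
      S i k * H ω k j + S i k * S k j) μ := by
    have := hHH i k j; have := hH i k; have := hH k j
    fun_prop
  simp only [mul_apply, Matrix.sub_apply, hexpand]
  rw [integral_finsetSum _ fun k _ => hint k, integral_finsetSum _ fun k _ => hHH i k j,
    ← sum_sub_distrib]
  refine sum_congr rfl fun k _ => ?_
  have := hHH i k j; have := hH i k; have := hH k j
  rw [integral_add (by fun_prop) (by fun_prop), integral_sub (by fun_prop) (by fun_prop),
    integral_sub (by fun_prop) (by fun_prop), integral_const_mul, integral_const_mul, hmean,
    hmean, integral_const]
  simp only [probReal_univ, one_smul]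
  ring

lemma integral_vecMulVec_mul_vecMulVec_apply [IsFiniteMeasure μ] {X : Ω → ι → ℝ}
    (hX : ∀ a, MemLp (fun ω => X ω a) 4 μ) (i j : ι) :
    ∫ ω, (vecMulVec (X ω) (X ω) * vecMulVec (X ω) (X ω)) i j ∂μ =
      ∑ k, ∫ ω, X ω i * X ω k * X ω k * X ω j ∂μ := by
  simp only [mul_apply, vecMulVec_apply]
  rw [integral_finsetSum _ fun k _ => ?_]
  · exact sum_congr rfl fun k _ => integral_congr_ae (.of_forall fun ω => by ring)
  · exact integrable_mul_mul_mul_of_memLp_four (hX i) (hX k) (hX k) (hX j) |>.congr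
      (.of_forall fun ω => by ring)

end MatrixMoments

section CovarianceKernel

variable {Ω ι : Type*} [MeasurableSpace Ω] {μ : Measure Ω} {X Z : Ω → ι → ℝ}

noncomputable def covarianceKernel (x z : ι → ℝ) : Matrix ι ι ℝ :=
  (2 : ℝ)⁻¹ • vecMulVec (x - z) (x - z)

@[simp]
lemma covarianceKernel_apply (x z : ι → ℝ) (a b : ι) :
    covarianceKernel x z a b = 2⁻¹ * ((x a - z a) * (x b - z b)) := by
  simp [covarianceKernel, vecMulVec_apply]

lemma covarianceKernel_sub_sub (x z m : ι → ℝ) :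
    covarianceKernel (x - m) (z - m) = covarianceKernel x z := by
  simp [covarianceKernel]

variable (hXZ : IndepFun X Z μ) (hid : IdentDistrib X Z μ μ)
include hid

lemma integrable_covarianceKernel_apply (hX : ∀ a, MemLp (fun ω => X ω a) 2 μ) (a b : ι) :
    Integrable (fun ω => covarianceKernel (X ω) (Z ω) a b) μ := by
  simp only [covarianceKernel_apply]
  exact ((hid.memLp_apply_sub hX a).integrable_mul (hid.memLp_apply_sub hX b)).const_mul _

lemma integrable_covarianceKernel_apply_mul [IsFiniteMeasure μ]
    (hX : ∀ a, MemLp (fun ω => X ω a) 4 μ) (a b c : ι) :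
    Integrable (fun ω => covarianceKernel (X ω) (Z ω) a b * covarianceKernel (X ω) (Z ω) b c)
      μ := by
  have hD := hid.memLp_apply_sub hX
  refine ((integrable_mul_mul_mul_of_memLp_four (hD a) (hD b) (hD b) (hD c)).const_mul 4⁻¹).congr
    (.of_forall fun ω => ?_)
  simp only [covarianceKernel_apply]
  ring

variable [IsProbabilityMeasure μ] (hcent : ∀ a, ∫ ω, X ω a ∂μ = 0)
include hXZ hcent

lemma integral_covarianceKernel_apply (hX : ∀ a, MemLp (fun ω => X ω a) 2 μ) (a b : ι) :
    ∫ ω, covarianceKernel (X ω) (Z ω) a b ∂μ = ∫ ω, X ω a * X ω b ∂μ := by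
  simp only [covarianceKernel_apply]
  rw [integral_const_mul, integral_sub_mul_sub_of_identDistrib hXZ hid hcent hX]
  ring

lemma integral_covarianceKernel_mul_self_apply [Fintype ι]
    (hX : ∀ a, MemLp (fun ω => X ω a) 4 μ) (i j : ι) :
    ∫ ω, (covarianceKernel (X ω) (Z ω) * covarianceKernel (X ω) (Z ω)) i j ∂μ =
      ∑ k, (2⁻¹ * ∫ ω, X ω i * X ω k * X ω k * X ω j ∂μ +
        (∫ ω, X ω i * X ω k ∂μ) * (∫ ω, X ω k * X ω j ∂μ) +
        2⁻¹ * ((∫ ω, X ω i * X ω j ∂μ) * ∫ ω, X ω k * X ω k ∂μ)) := by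
  simp only [mul_apply]
  rw [integral_finsetSum _ fun k _ => integrable_covarianceKernel_apply_mul hid hX i k j]
  refine sum_congr rfl fun k _ => ?_
  have hexpand (ω : Ω) :
      covarianceKernel (X ω) (Z ω) i k * covarianceKernel (X ω) (Z ω) k j = 4⁻¹ *
        ((X ω i - Z ω i) * (X ω k - Z ω k) * (X ω k - Z ω k) * (X ω j - Z ω j)) := by
    simp only [covarianceKernel_apply]
    ring
  simp only [hexpand]
  rw [integral_const_mul, integral_sub_mul_sub_mul_sub_mul_sub_of_identDistrib hXZ hid hcent hX]
  ring

end CovarianceKernel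

theorem variance_of_covariance_kernel_general
    {d : ℕ} {Ω : Type*} [MeasurableSpace Ω] (μ : Measure Ω) [IsProbabilityMeasure μ]
    (Y₁ Y₂ : Ω → Fin d → ℝ)
    (hindep : IndepFun Y₁ Y₂ μ) (hid : IdentDistrib Y₁ Y₂ μ μ)
    (m : Fin d → ℝ) (hm : ∀ i, ∫ ω, Y₁ ω i ∂μ = m i)
    (hL4 : ∀ i, MemLp (fun ω => Y₁ ω i) 4 μ)
    (S : Matrix (Fin d) (Fin d) ℝ)
    (hS : ∀ i j, S i j = ∫ ω, (Y₁ ω i - m i) * (Y₁ ω j - m j) ∂μ)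
    (H : Ω → Matrix (Fin d) (Fin d) ℝ)
    (hH : ∀ ω, H ω = (2 : ℝ)⁻¹ • Matrix.vecMulVec (Y₁ ω - Y₂ ω) (Y₁ ω - Y₂ ω)) :
    ∀ i j,
      ∫ ω, ((H ω - S) * (H ω - S)) i j ∂μ =
        (1 / 2 : ℝ) *
          ((∫ ω, (Matrix.vecMulVec (Y₁ ω - m) (Y₁ ω - m) *
              Matrix.vecMulVec (Y₁ ω - m) (Y₁ ω - m)) i j ∂μ) +
            S.trace * S i j) := by
  intro i j
  set X : Ω → Fin d → ℝ := fun ω => Y₁ ω - m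
  set Z : Ω → Fin d → ℝ := fun ω => Y₂ ω - m
  have hsub : Measurable fun v : Fin d → ℝ => v - m := by fun_prop
  have hXZ : IndepFun X Z μ := hindep.comp hsub hsub
  have hidXZ : IdentDistrib X Z μ μ := hid.comp hsub
  have hX4 (a : Fin d) : MemLp (fun ω => X ω a) 4 μ := (hL4 a).sub (memLp_const (m a))
  have hX2 (a : Fin d) : MemLp (fun ω => X ω a) 2 μ := (hX4 a).mono_exponent (by norm_num)
  have hcent (a : Fin d) : ∫ ω, X ω a ∂μ = 0 := by
    simp [X, integral_sub ((hL4 a).integrable (by norm_num)) (integrable_const _), hm]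
  have hC (a b : Fin d) : ∫ ω, X ω a * X ω b ∂μ = S a b := (hS a b).symm
  have hK : H = fun ω => covarianceKernel (X ω) (Z ω) := by
    funext ω
    rw [hH, covarianceKernel_sub_sub]
    rfl
  subst hK
  rw [integral_sub_mul_sub_apply (integrable_covarianceKernel_apply hidXZ hX2)
      (integrable_covarianceKernel_apply_mul hidXZ hX4)
      (fun a b => (integral_covarianceKernel_apply hXZ hidXZ hcent hX2 a b).trans (hC a b)),
    integral_covarianceKernel_mul_self_apply hXZ hidXZ hcent hX4]
  change _ = 1 / 2 * (∫ ω, (vecMulVec (X ω) (X ω) * vecMulVec (X ω) (X ω)) i j ∂μ + _)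
  rw [integral_vecMulVec_mul_vecMulVec_apply hX4]
  simp only [hC, mul_apply, trace, diag_apply, sum_add_distrib, ← mul_sum]
  ring

theorem variance_of_covariance_kernel
    {d : ℕ} {Ω : Type*} [MeasurableSpace Ω] (μ : Measure Ω) [IsProbabilityMeasure μ]
    (Y₁ Y₂ : Ω → Fin d → ℝ)
    (hmeas₁ : Measurable Y₁) (hmeas₂ : Measurable Y₂)
    (hindep : IndepFun Y₁ Y₂ μ) (hid : IdentDistrib Y₁ Y₂ μ μ)
    (m : Fin d → ℝ) (hm : ∀ i, ∫ ω, Y₁ ω i ∂μ = m i)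
    (hL4 : ∀ i, MemLp (fun ω => Y₁ ω i) 4 μ)
    (S : Matrix (Fin d) (Fin d) ℝ)
    (hS : ∀ i j, S i j = ∫ ω, (Y₁ ω i - m i) * (Y₁ ω j - m j) ∂μ)
    (H : Ω → Matrix (Fin d) (Fin d) ℝ)
    (hH : ∀ ω, H ω = (2 : ℝ)⁻¹ • Matrix.vecMulVec (Y₁ ω - Y₂ ω) (Y₁ ω - Y₂ ω)) :
    ∀ i j,
      ∫ ω, ((H ω - S) * (H ω - S)) i j ∂μ =
        (1 / 2 : ℝ) *
          ((∫ ω, (Matrix.vecMulVec (Y₁ ω - m) (Y₁ ω - m) *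
              Matrix.vecMulVec (Y₁ ω - m) (Y₁ ω - m)) i j ∂μ) +
            S.trace * S i j) :=
  variance_of_covariance_kernel_general μ Y₁ Y₂ hindep hid m hm hL4 S hS H hH
end

section
/- Let Y be a random vector in ℝ^d with mean μ, covariance Σ, E‖Y-μ‖₂⁴ < ∞, and suppose the kurtosis of all linear forms is bounded by K: for every unit vector v, E⟨Y-μ, v⟩⁴ ≤ K (E⟨Y-μ, v⟩²)². Then ‖E[((Y-μ)(Y-μ)ᵀ)²]‖ ≤ K · tr(Σ) · ‖Σ‖, where ‖·‖ is the operator norm. -/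
open Matrix MeasureTheory

/-- Operator (spectral) norm of a real matrix, viewed as a linear map
between Euclidean spaces. -/
noncomputable def opNorm {m n : Type*} [Fintype m] [Fintype n] [DecidableEq n]
    (A : Matrix m n ℝ) : ℝ :=
  ‖(Matrix.toEuclideanLin A).toContinuousLinearMap‖

/-! Write `X = Y - m` and, for a unit vector `v`, `W = ⟨X, v⟩`. Then
`vᵀ Q v = E[‖X‖² W²] = ∑ₖ E[Xₖ² W²]`, and Cauchy–Schwarz together with the kurtosis bound at `v`
and at the coordinate vectors gives `E[Xₖ² W²] ≤ (E[Xₖ⁴] E[W⁴])^{1/2} ≤ K Sₖₖ vᵀ S v`. Summing over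
`k`, `vᵀ Q v ≤ K tr(S) vᵀ S v ≤ K tr(S) ‖S‖`, and since `Q` is symmetric its operator norm is the
supremum of `|vᵀ Q v|` over unit vectors. -/

theorem ContinuousLinearMap.norm_le_of_abs_inner_self_le {E : Type*} [NormedAddCommGroup E]
    [InnerProductSpace ℝ E] {T : E →L[ℝ] E} (hT : (T : E →ₗ[ℝ] E).IsSymmetric) {C : ℝ}
    (hC : 0 ≤ C) (h : ∀ x, ‖x‖ = 1 → |inner ℝ (T x) x| ≤ C) : ‖T‖ ≤ C := by
  rw [T.norm_eq_iSup_rayleighQuotient hT]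
  refine ciSup_le fun x => ?_
  rcases eq_or_ne x 0 with rfl | hx
  · simpa using hC
  · have hx' : ‖x‖ ≠ 0 := norm_ne_zero_iff.2 hx
    have hunit : ‖‖x‖⁻¹ • x‖ = 1 := by rw [norm_smul, norm_inv, norm_norm, inv_mul_cancel₀ hx']
    rw [← T.rayleigh_smul x (inv_ne_zero hx'), rayleighQuotient, reApplyInnerSelf_apply, hunit,
      one_pow, div_one]
    exact h _ hunit

section EuclideanMatrix

variable {n : Type*} [Fintype n]

theorem norm_toLp_sq (v : n → ℝ) : ‖WithLp.toLp 2 v‖ ^ 2 = v ⬝ᵥ v := by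
  rw [← real_inner_self_eq_norm_sq, EuclideanSpace.inner_eq_star_dotProduct]
  rfl

theorem inner_toEuclideanLin_self [DecidableEq n] (A : Matrix n n ℝ) (v : n → ℝ) :
    inner ℝ (toEuclideanLin A (WithLp.toLp 2 v)) (WithLp.toLp 2 v) = v ⬝ᵥ A *ᵥ v := by
  rw [EuclideanSpace.inner_eq_star_dotProduct]
  rfl

theorem dotProduct_mulVec_le_opNorm [DecidableEq n] (A : Matrix n n ℝ) {v : n → ℝ}
    (hv : v ⬝ᵥ v = 1) : v ⬝ᵥ A *ᵥ v ≤ opNorm A := by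
  have hunit : ‖WithLp.toLp 2 v‖ = 1 := by
    rw [← pow_eq_one_iff_of_nonneg (norm_nonneg _) two_ne_zero, norm_toLp_sq, hv]
  have := (toEuclideanLin A).toContinuousLinearMap.rayleighQuotient_le_norm (WithLp.toLp 2 v)
  rw [ContinuousLinearMap.rayleighQuotient, ContinuousLinearMap.reApplyInnerSelf_apply, hunit,
    one_pow, div_one, LinearMap.coe_toContinuousLinearMap', inner_toEuclideanLin_self] at this
  exact (le_abs_self _).trans this

theorem opNorm_le_of_abs_dotProduct_mulVec_le [DecidableEq n] {A : Matrix n n ℝ}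
    (hA : A.IsHermitian) {C : ℝ} (hC : 0 ≤ C) (h : ∀ v, v ⬝ᵥ v = 1 → |v ⬝ᵥ A *ᵥ v| ≤ C) :
    opNorm A ≤ C := by
  refine ContinuousLinearMap.norm_le_of_abs_inner_self_le
    (isSymmetric_toEuclideanLin_iff.2 hA) hC fun x hx => ?_
  have hv : x.ofLp ⬝ᵥ x.ofLp = 1 := by rw [← norm_toLp_sq, WithLp.toLp_ofLp, hx, one_pow]
  simpa [← inner_toEuclideanLin_self] using h x.ofLp hv

end EuclideanMatrix

section VecMulVec

variable {n : Type*} [Fintype n]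

theorem vecMulVec_self_mul_self (x : n → ℝ) :
    vecMulVec x x * vecMulVec x x = (x ⬝ᵥ x) • vecMulVec x x := by
  rw [vecMulVec_mul_vecMulVec, vecMulVec_smul]

theorem dotProduct_vecMulVec_self_mulVec (x v : n → ℝ) :
    v ⬝ᵥ vecMulVec x x *ᵥ v = (x ⬝ᵥ v) ^ 2 := by
  rw [vecMulVec_mulVec, op_smul_eq_smul, dotProduct_smul, smul_eq_mul, dotProduct_comm, sq]

theorem isHermitian_vecMulVec_self_mul_self (x : n → ℝ) :
    (vecMulVec x x * vecMulVec x x).IsHermitian :=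
  IsHermitian.ext fun i j => by
    simp only [vecMulVec_self_mul_self, star_trivial, Matrix.smul_apply, vecMulVec_apply, mul_comm]

end VecMulVec

instance : ENNReal.HolderTriple 4 4 2 where
  inv_add_inv_eq_inv := by
    rw [show (4 : ENNReal) = 2 * 2 by norm_num, ENNReal.mul_inv (by simp) (by simp), ← mul_add,
      ENNReal.inv_two_add_inv_two, mul_one]

section Moments

variable {Ω : Type*} [MeasurableSpace Ω] {μ : Measure Ω}

theorem integral_mul_sq_le_sq_mul_sq {f g : Ω → ℝ} (hf : MemLp f 2 μ) (hg : MemLp g 2 μ) :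
    (∫ ω, f ω * g ω ∂μ) ^ 2 ≤ (∫ ω, f ω ^ 2 ∂μ) * ∫ ω, g ω ^ 2 ∂μ := by
  have hfg : Integrable (fun ω => f ω * g ω) μ := hf.integrable_mul hg
  have hquad : ∀ t : ℝ, 0 ≤ (∫ ω, f ω ^ 2 ∂μ) * (t * t) + (2 * ∫ ω, f ω * g ω ∂μ) * t
      + ∫ ω, g ω ^ 2 ∂μ := fun t => by
    have hcross : Integrable (fun ω => t ^ 2 * f ω ^ 2 + 2 * t * (f ω * g ω)) μ :=
      (hf.integrable_sq.const_mul _).add (hfg.const_mul _)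
    have hexp : ∫ ω, (t * f ω + g ω) ^ 2 ∂μ
        = ∫ ω, (t ^ 2 * f ω ^ 2 + 2 * t * (f ω * g ω)) + g ω ^ 2 ∂μ := by
      congr with ω; ring
    rw [integral_add hcross hg.integrable_sq,
      integral_add (hf.integrable_sq.const_mul _) (hfg.const_mul _), integral_const_mul,
      integral_const_mul] at hexp
    nlinarith [integral_nonneg (μ := μ) (f := fun ω => (t * f ω + g ω) ^ 2) fun ω => sq_nonneg _]
  have := discrim_le_zero hquad
  rw [discrim] at this
  nlinarith

theorem mul_integral_sq_nonneg_of_kurtosis {f : Ω → ℝ} {K : ℝ}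
    (hK : ∫ ω, f ω ^ 4 ∂μ ≤ K * (∫ ω, f ω ^ 2 ∂μ) ^ 2) : 0 ≤ K * ∫ ω, f ω ^ 2 ∂μ := by
  have h4 : 0 ≤ ∫ ω, f ω ^ 4 ∂μ := integral_nonneg fun ω => by positivity
  rcases (integral_nonneg (μ := μ) (f := fun ω => f ω ^ 2) fun ω => sq_nonneg _).eq_or_lt
    with h2 | h2
  · rw [← h2, mul_zero]
  · exact nonneg_of_mul_nonneg_left (by nlinarith) h2

theorem MeasureTheory.MemLp.sq_of_memLp_four {f : Ω → ℝ} (hf : MemLp f 4 μ) :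
    MemLp (fun ω => f ω ^ 2) 2 μ := by
  simpa only [Pi.mul_def, sq] using hf.mul hf

theorem integral_sq_mul_sq_le_of_kurtosis {f g : Ω → ℝ} {K : ℝ} (hf : MemLp f 4 μ)
    (hg : MemLp g 4 μ) (hfK : ∫ ω, f ω ^ 4 ∂μ ≤ K * (∫ ω, f ω ^ 2 ∂μ) ^ 2)
    (hgK : ∫ ω, g ω ^ 4 ∂μ ≤ K * (∫ ω, g ω ^ 2 ∂μ) ^ 2) :
    ∫ ω, f ω ^ 2 * g ω ^ 2 ∂μ ≤ K * (∫ ω, f ω ^ 2 ∂μ) * ∫ ω, g ω ^ 2 ∂μ := by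
  have hpow : ∀ h : Ω → ℝ, ∫ ω, (h ω ^ 2) ^ 2 ∂μ = ∫ ω, h ω ^ 4 ∂μ := fun h => by
    simp only [← pow_mul]
  have hCS := integral_mul_sq_le_sq_mul_sq hf.sq_of_memLp_four hg.sq_of_memLp_four
  rw [hpow, hpow] at hCS
  have hf2 := mul_integral_sq_nonneg_of_kurtosis hfK
  have hg2 := mul_integral_sq_nonneg_of_kurtosis hgK
  have hprod : (∫ ω, f ω ^ 4 ∂μ) * ∫ ω, g ω ^ 4 ∂μ
      ≤ (K * (∫ ω, f ω ^ 2 ∂μ) * ∫ ω, g ω ^ 2 ∂μ) ^ 2 := by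
    calc _ ≤ K * (∫ ω, f ω ^ 2 ∂μ) ^ 2 * (K * (∫ ω, g ω ^ 2 ∂μ) ^ 2) :=
          mul_le_mul hfK hgK (integral_nonneg fun ω => by positivity)
            ((integral_nonneg fun ω => by positivity).trans hfK)
      _ = _ := by ring
  exact (le_abs_self _).trans (abs_le_of_sq_le_sq (hCS.trans hprod)
    (mul_nonneg hf2 (integral_nonneg fun ω => sq_nonneg _)))

theorem dotProduct_mulVec_eq_integral {n : Type*} [Fintype n] {M : Ω → Matrix n n ℝ}
    {A : Matrix n n ℝ} (hM : ∀ i j, Integrable (fun ω => M ω i j) μ)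
    (hA : ∀ i j, A i j = ∫ ω, M ω i j ∂μ) (v : n → ℝ) :
    v ⬝ᵥ A *ᵥ v = ∫ ω, v ⬝ᵥ M ω *ᵥ v ∂μ := by
  simp only [dotProduct, mulVec]
  rw [integral_finsetSum _ fun i _ =>
    (integrable_finsetSum _ fun j _ => (hM i j).mul_const _).const_mul _]
  refine Finset.sum_congr rfl fun i _ => ?_
  rw [integral_const_mul, integral_finsetSum _ fun j _ => (hM i j).mul_const _]
  simp only [hA, integral_mul_const]

theorem isHermitian_of_apply_eq_integral {n : Type*} {M : Ω → Matrix n n ℝ} {A : Matrix n n ℝ}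
    (hM : ∀ ω, (M ω).IsHermitian) (hA : ∀ i j, A i j = ∫ ω, M ω i j ∂μ) : A.IsHermitian :=
  IsHermitian.ext fun i j => by simp only [star_trivial, hA, ← (hM _).apply i j]

end Moments

section RandomVector

variable {Ω : Type*} [MeasurableSpace Ω] {μ : Measure Ω} {n : Type*} [Fintype n] {X : Ω → n → ℝ}

theorem memLp_dotProduct {p : ENNReal} (hX : ∀ i, MemLp (fun ω => X ω i) p μ) (v : n → ℝ) :
    MemLp (fun ω => X ω ⬝ᵥ v) p μ :=
  memLp_finsetSum _ fun i _ => (hX i).mul_const (v i)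

theorem dotProduct_mulVec_eq_sum_integral_sq_mul_sq (hX : ∀ i, MemLp (fun ω => X ω i) 4 μ)
    {Q : Matrix n n ℝ} (hQ : ∀ i j, Q i j =
      ∫ ω, (vecMulVec (X ω) (X ω) * vecMulVec (X ω) (X ω)) i j ∂μ) (v : n → ℝ) :
    v ⬝ᵥ Q *ᵥ v = ∑ k, ∫ ω, X ω k ^ 2 * (X ω ⬝ᵥ v) ^ 2 ∂μ := by
  have hprod : ∀ i j, MemLp (fun ω => X ω i * X ω j) 2 μ := fun i j => (hX j).mul (hX i)
  have hentry : ∀ i j, Integrable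
      (fun ω => (vecMulVec (X ω) (X ω) * vecMulVec (X ω) (X ω)) i j) μ := fun i j => by
    simp only [vecMulVec_self_mul_self, Matrix.smul_apply, vecMulVec_apply, smul_eq_mul]
    exact (memLp_finsetSum _ fun k _ => hprod k k).integrable_mul (hprod i j)
  rw [dotProduct_mulVec_eq_integral hentry hQ,
    ← integral_finsetSum (f := fun k ω => X ω k ^ 2 * (X ω ⬝ᵥ v) ^ 2) _ fun k _ =>
    (hX k).sq_of_memLp_four.integrable_mul (memLp_dotProduct hX v).sq_of_memLp_four]
  congr with ω
  rw [vecMulVec_self_mul_self, smul_mulVec, dotProduct_smul, dotProduct_vecMulVec_self_mulVec,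
    smul_eq_mul, dotProduct, Finset.sum_mul]
  simp only [sq]

end RandomVector

theorem matrix_variance_upper_bound_general
    {d : ℕ} {Ω : Type*} [MeasurableSpace Ω] (μ : Measure Ω) [IsProbabilityMeasure μ]
    (Y : Ω → Fin d → ℝ)
    (m : Fin d → ℝ)
    (hL4 : ∀ i, MemLp (fun ω => Y ω i) 4 μ)
    (S : Matrix (Fin d) (Fin d) ℝ)
    (hS : ∀ i j, S i j = ∫ ω, (Y ω i - m i) * (Y ω j - m j) ∂μ)
    (K : ℝ)
    (hkurt : ∀ v : Fin d → ℝ, (∑ i, v i ^ 2) = 1 →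
      ∫ ω, (∑ i, (Y ω i - m i) * v i) ^ 4 ∂μ ≤
        K * (∫ ω, (∑ i, (Y ω i - m i) * v i) ^ 2 ∂μ) ^ 2)
    (Q : Matrix (Fin d) (Fin d) ℝ)
    (hQ : ∀ i j, Q i j = ∫ ω,
      (Matrix.vecMulVec (Y ω - m) (Y ω - m) *
        Matrix.vecMulVec (Y ω - m) (Y ω - m)) i j ∂μ) :
    opNorm Q ≤ K * S.trace * opNorm S := by
  set X : Ω → Fin d → ℝ := fun ω => Y ω - m
  have hX : ∀ i, MemLp (fun ω => X ω i) 4 μ := fun i => (hL4 i).sub (memLp_const (m i))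
  have hX2 : ∀ i j, Integrable (fun ω => vecMulVec (X ω) (X ω) i j) μ := fun i j =>
    ((hX i).mono_exponent (p := 2) (by norm_num)).integrable_mul
      ((hX j).mono_exponent (p := 2) (by norm_num))
  have hSv : ∀ v, v ⬝ᵥ S *ᵥ v = ∫ ω, (X ω ⬝ᵥ v) ^ 2 ∂μ := fun v => by
    simp only [dotProduct_mulVec_eq_integral hX2 hS, dotProduct_vecMulVec_self_mulVec]
  have hSdiag : ∀ k, S k k = ∫ ω, X ω k ^ 2 ∂μ := fun k => by simpa using hSv (Pi.single k 1)
  have hkurtX : ∀ v, v ⬝ᵥ v = 1 →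
      ∫ ω, (X ω ⬝ᵥ v) ^ 4 ∂μ ≤ K * (∫ ω, (X ω ⬝ᵥ v) ^ 2 ∂μ) ^ 2 := fun v hv =>
    hkurt v (by simpa only [dotProduct, sq] using hv)
  have hkurt_coord : ∀ k, ∫ ω, X ω k ^ 4 ∂μ ≤ K * (∫ ω, X ω k ^ 2 ∂μ) ^ 2 := fun k => by
    simpa using hkurtX (Pi.single k 1) (by simp)
  have hKS : 0 ≤ K * S.trace := by
    rw [trace, Finset.mul_sum]
    exact Finset.sum_nonneg fun k _ => by
      rw [diag_apply, hSdiag]; exact mul_integral_sq_nonneg_of_kurtosis (hkurt_coord k)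
  refine opNorm_le_of_abs_dotProduct_mulVec_le
    (isHermitian_of_apply_eq_integral (fun _ => isHermitian_vecMulVec_self_mul_self _) hQ)
    (mul_nonneg hKS (norm_nonneg _)) fun v hv => ?_
  rw [dotProduct_mulVec_eq_sum_integral_sq_mul_sq hX hQ, abs_of_nonneg (Finset.sum_nonneg
    fun k _ => integral_nonneg fun ω => by positivity)]
  calc ∑ k, ∫ ω, X ω k ^ 2 * (X ω ⬝ᵥ v) ^ 2 ∂μ ≤ ∑ k, K * S k k * (v ⬝ᵥ S *ᵥ v) :=
        Finset.sum_le_sum fun k _ => by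
          rw [hSdiag, hSv]
          exact integral_sq_mul_sq_le_of_kurtosis (hX k) (memLp_dotProduct hX v)
            (hkurt_coord k) (hkurtX v hv)
    _ = K * S.trace * (v ⬝ᵥ S *ᵥ v) := by rw [← Finset.sum_mul, ← Finset.mul_sum]; rfl
    _ ≤ K * S.trace * opNorm S :=
        mul_le_mul_of_nonneg_left (dotProduct_mulVec_le_opNorm S hv) hKS

theorem matrix_variance_upper_bound
    {d : ℕ} {Ω : Type*} [MeasurableSpace Ω] (μ : Measure Ω) [IsProbabilityMeasure μ]
    (Y : Ω → Fin d → ℝ) (hmeas : Measurable Y)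
    (m : Fin d → ℝ) (hm : ∀ i, ∫ ω, Y ω i ∂μ = m i)
    (hL4 : ∀ i, MemLp (fun ω => Y ω i) 4 μ)
    (S : Matrix (Fin d) (Fin d) ℝ)
    (hS : ∀ i j, S i j = ∫ ω, (Y ω i - m i) * (Y ω j - m j) ∂μ)
    (K : ℝ)
    (hkurt : ∀ v : Fin d → ℝ, (∑ i, v i ^ 2) = 1 →
      ∫ ω, (∑ i, (Y ω i - m i) * v i) ^ 4 ∂μ ≤
        K * (∫ ω, (∑ i, (Y ω i - m i) * v i) ^ 2 ∂μ) ^ 2)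
    (Q : Matrix (Fin d) (Fin d) ℝ)
    (hQ : ∀ i j, Q i j = ∫ ω,
      (Matrix.vecMulVec (Y ω - m) (Y ω - m) *
        Matrix.vecMulVec (Y ω - m) (Y ω - m)) i j ∂μ) :
    opNorm Q ≤ K * S.trace * opNorm S :=
  matrix_variance_upper_bound_general μ Y m hL4 S hS K hkurt Q hQ
end
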